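/- Let X be a CAT(0) space splitting as a metric product X = X₁ × X₂. Then a subset F ⊆ X is a maximal flat if and only if F = F₁ × F₂ where F₁ is a maximal flat in X₁ and F₂ is a maximal flat in X₂. -/

import Mathlib

/-!
Let `e : ℝᵏ → X₁ × X₂` be an isometric embedding with first component `e₁`. A line of `ℝᵏ`
goes to a geodesic, and the equality case of Minkowski's inequality in the plane forces its
projection to `X₁` to be a geodesic travelled at constant speed. Along two parallel lines the
`X₁`-distance is therefore a convex (CAT(0)) and bounded function, hence constant, so
`d(e₁ x, e₁ y) = p (x - y)` for a seminorm `p` on `ℝᵏ`. The CAT(0) inequality gives one half of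
the parallelogram law both for `p` and for its `X₂`-counterpart `q`; as `p² + q² = ‖·‖²`, the
law holds for `p`, and by Jordan–von Neumann `ℝᵏ / ker p` is Euclidean: projections of flats
are flats. Products of flats are flats, so a maximal flat is the product of its projections,
and maximality passes between a product and its factors.
-/

def IsUnitSpeedOn {X : Type*} [MetricSpace X] (γ : ℝ → X) (s : Set ℝ) : Prop :=
  ∀ a ∈ s, ∀ b ∈ s, dist (γ a) (γ b) = |a - b|

def GeodesicMetricSpace (X : Type*) [MetricSpace X] : Prop :=
  ∀ x y : X, ∃ γ : ℝ → X, γ 0 = x ∧ γ (dist x y) = y ∧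
    IsUnitSpeedOn γ (Set.Icc 0 (dist x y))

def CAT0Space (X : Type*) [MetricSpace X] : Prop :=
  GeodesicMetricSpace X ∧ ∀ x y m z : X,
    dist x m = dist x y / 2 → dist y m = dist x y / 2 →
    dist z m ^ 2 ≤ dist z x ^ 2 / 2 + dist z y ^ 2 / 2 - dist x y ^ 2 / 4

/-- A flat in a metric space: a subset isometric to a Euclidean space `ℝᵏ`. -/
def IsFlat {X : Type*} [MetricSpace X] (F : Set X) : Prop :=
  ∃ (k : ℕ) (e : EuclideanSpace ℝ (Fin k) → X), Isometry e ∧ Set.range e = F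

/-- A maximal flat: a flat not properly contained in any other flat. -/
def IsMaximalFlat {X : Type*} [MetricSpace X] (F : Set X) : Prop :=
  IsFlat F ∧ ∀ F' : Set X, IsFlat F' → F ⊆ F' → F = F'

open Set

theorem eq_mul_abs_sub_of_additive_of_proportional {f : ℝ → ℝ → ℝ}
    (hsymm : ∀ s t, f s t = f t s) (hdiag : ∀ s, f s s = 0)
    (hadd : ∀ s t u, s < t → t < u → f s u = f s t + f t u)
    (hprop : ∀ s t u, s < t → t < u → f s t * (u - t) = f t u * (t - s)) (s t : ℝ) :
    f s t = f 0 1 * |s - t| := by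
  have hscale : ∀ a s t b, a < s → s < t → t < b → f s t * (b - a) = f a b * (t - s) := by
    intro a s t b has hst htb
    have h₁ := hadd a s b has (hst.trans htb)
    have h₂ := hprop a s b has (hst.trans htb)
    have h₃ := hadd s t b hst htb
    have h₄ := hprop s t b hst htb
    refine mul_right_cancel₀ (sub_ne_zero.2 (hst.trans htb).ne') ?_
    linear_combination -(t - s) * (b - s) * h₁ - (t - s) * h₂ - (b - a) * (t - s) * h₃ +
      (b - a) * h₄
  have hlt : ∀ s t, s < t → f s t = f 0 1 * (t - s) := by
    intro s t hst
    have has : min s 0 - 1 < s := by linarith [min_le_left s 0]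
    have ha : min s 0 - 1 < 0 := by linarith [min_le_right s 0]
    have htb : t < max t 1 + 1 := by linarith [le_max_left t 1]
    have hb : 1 < max t 1 + 1 := by linarith [le_max_right t 1]
    have h₁ := hscale _ _ _ _ has hst htb
    have h₂ := hscale _ _ _ _ ha one_pos hb
    refine mul_right_cancel₀ (sub_ne_zero.2 (has.trans (hst.trans htb)).ne') ?_
    linear_combination h₁ - (t - s) * h₂
  rcases lt_trichotomy s t with hst | rfl | hts
  · rw [hlt s t hst, abs_sub_comm, abs_of_pos (sub_pos.2 hst)]
  · rw [hdiag, sub_self, abs_zero, mul_zero]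
  · rw [hsymm, hlt t s hts, abs_of_pos (sub_pos.2 hts)]

theorem apply_eq_apply_of_midpoint_le_of_bddAbove {φ : ℝ → ℝ}
    (hmid : ∀ s t, φ ((s + t) / 2) ≤ (φ s + φ t) / 2) (hbdd : BddAbove (range φ)) (s t : ℝ) :
    φ s = φ t := by
  obtain ⟨C, hC⟩ := hbdd
  suffices h : ∀ p q, φ q ≤ φ p from le_antisymm (h t s) (h s t)
  intro p q
  by_contra! hpq
  -- midpoint convexity doubles the increment `φ q - φ p` along `p, q, 2q - p, 4q - 3p, …`
  have hgrow : ∀ n : ℕ, φ p + 2 ^ n * (φ q - φ p) ≤ φ (p + 2 ^ n * (q - p)) := by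
    intro n
    induction n with
    | zero => simp
    | succ n ih =>
      have h := hmid p (p + 2 ^ (n + 1) * (q - p))
      rw [show (p + (p + 2 ^ (n + 1) * (q - p))) / 2 = p + 2 ^ n * (q - p) by ring] at h
      rw [pow_succ] at h ⊢
      linarith
  obtain ⟨n, hn⟩ := pow_unbounded_of_one_lt ((C - φ p) / (φ q - φ p)) one_lt_two
  rw [div_lt_iff₀ (sub_pos.2 hpq)] at hn
  linarith [hgrow n, hC (mem_range_self (p + 2 ^ n * (q - p)))]

def IsMidpoint {X : Type*} [PseudoMetricSpace X] (x y m : X) : Prop :=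
  dist x m = dist x y / 2 ∧ dist y m = dist x y / 2

theorem IsMidpoint.symm {X : Type*} [PseudoMetricSpace X] {x y m : X} (h : IsMidpoint x y m) :
    IsMidpoint y x m := by
  rw [IsMidpoint, dist_comm y x]
  exact ⟨h.2, h.1⟩

namespace CAT0Space

variable {X : Type*} [MetricSpace X]

theorem exists_isMidpoint (hX : CAT0Space X) (x y : X) : ∃ m, IsMidpoint x y m := by
  obtain ⟨γ, hγ₀, hγ₁, hγ⟩ := hX.1 x y
  have hd : 0 ≤ dist x y := dist_nonneg
  have hmid : dist x y / 2 ∈ Icc 0 (dist x y) := ⟨by linarith, by linarith⟩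
  have hx := hγ 0 ⟨le_rfl, hd⟩ _ hmid
  have hy := hγ _ ⟨hd, le_rfl⟩ _ hmid
  rw [hγ₀] at hx
  rw [hγ₁] at hy
  refine ⟨γ (dist x y / 2), hx.trans ?_, hy.trans ?_⟩
  · rw [zero_sub, abs_neg, abs_of_nonneg (by linarith)]
  · rw [abs_of_nonneg (by linarith)]
    ring

theorem dist_le_half_of_isMidpoint (hX : CAT0Space X) {z x y m m' : X}
    (hm : IsMidpoint z x m) (hm' : IsMidpoint z y m') : dist m m' ≤ dist x y / 2 := by
  have h₁ := hX.2 z x m m' hm.1 hm.2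
  have h₂ := hX.2 z y m' x hm'.1 hm'.2
  rw [dist_comm m' z, hm'.1, dist_comm m' x, dist_comm m' m] at h₁
  rw [dist_comm x z] at h₂
  have hsq : dist m m' ^ 2 ≤ (dist x y / 2) ^ 2 := by nlinarith
  exact (sq_le_sq₀ dist_nonneg (by positivity)).1 hsq

theorem dist_le_of_isMidpoint (hX : CAT0Space X) {x₁ y₁ m₁ x₂ y₂ m₂ : X}
    (hm₁ : IsMidpoint x₁ y₁ m₁) (hm₂ : IsMidpoint x₂ y₂ m₂) :
    dist m₁ m₂ ≤ (dist x₁ x₂ + dist y₁ y₂) / 2 := by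
  obtain ⟨c, hc⟩ := hX.exists_isMidpoint y₁ x₂
  calc dist m₁ m₂ ≤ dist m₁ c + dist c m₂ := dist_triangle _ _ _
    _ ≤ dist x₁ x₂ / 2 + dist y₁ y₂ / 2 :=
      add_le_add (hX.dist_le_half_of_isMidpoint hm₁.symm hc)
        (hX.dist_le_half_of_isMidpoint hc.symm hm₂)
    _ = (dist x₁ x₂ + dist y₁ y₂) / 2 := by ring

theorem parallelogram_le (hX : CAT0Space X) {V : Type*} [AddCommGroup V] [Module ℝ V]
    (p : Seminorm ℝ V) {f : V → X} (hf : ∀ x y, dist (f x) (f y) = p (x - y)) (u v : V) :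
    2 * (p u ^ 2 + p v ^ 2) ≤ p (u + v) ^ 2 + p (u - v) ^ 2 := by
  have h2u : p (u + u) = 2 * p u := by
    rw [← two_smul ℝ, map_smul_eq_mul, Real.norm_two]
  have hm : IsMidpoint (f u) (f (-u)) (f 0) := by
    simp only [IsMidpoint, hf, sub_neg_eq_add, h2u, sub_zero, map_neg_eq_map]
    constructor <;> ring
  have h := hX.2 _ _ _ (f v) hm.1 hm.2
  simp only [hf, sub_zero, sub_neg_eq_add, h2u, map_sub_rev p v u, add_comm v u] at h
  linarith

end CAT0Space

theorem WithLp.prod_dist_sq {α β : Type*} [PseudoMetricSpace α] [PseudoMetricSpace β]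
    (x y : WithLp 2 (α × β)) : dist x y ^ 2 = dist x.fst y.fst ^ 2 + dist x.snd y.snd ^ 2 := by
  rw [prod_dist_eq_add (by norm_num)]
  simp only [ENNReal.toReal_ofNat, Real.rpow_two, ← Real.sqrt_eq_rpow]
  exact Real.sq_sqrt (by positivity)

theorem WithLp.dist_fst_eq_add_and_mul_eq_of_dist_eq_add {α β : Type*} [PseudoMetricSpace α]
    [PseudoMetricSpace β] {x y z : WithLp 2 (α × β)} (h : dist x z = dist x y + dist y z) :
    dist x.fst z.fst = dist x.fst y.fst + dist y.fst z.fst ∧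
      dist x.fst y.fst * dist y z = dist y.fst z.fst * dist x y := by
  have hxy := prod_dist_sq x y
  have hyz := prod_dist_sq y z
  have hxz := prod_dist_sq x z
  have ht₁ := dist_triangle x.fst y.fst z.fst
  have ht₂ := dist_triangle x.snd y.snd z.snd
  rw [h] at hxz
  set a₁ := dist x.fst y.fst
  set a₂ := dist x.snd y.snd
  set b₁ := dist y.fst z.fst
  set b₂ := dist y.snd z.snd
  set c₁ := dist x.fst z.fst
  set c₂ := dist x.snd z.snd
  set A := dist x y
  set B := dist y z
  have ha₁ : 0 ≤ a₁ := dist_nonneg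
  have ha₂ : 0 ≤ a₂ := dist_nonneg
  have hb₁ : 0 ≤ b₁ := dist_nonneg
  have hb₂ : 0 ≤ b₂ := dist_nonneg
  have hc₁ : 0 ≤ c₁ := dist_nonneg
  have hc₂ : 0 ≤ c₂ := dist_nonneg
  have hA : 0 ≤ A := dist_nonneg
  have hB : 0 ≤ B := dist_nonneg
  -- Cauchy–Schwarz in the plane, and its reverse forced by the triangle inequalities
  have hcs : a₁ * b₁ + a₂ * b₂ ≤ A * B := by
    nlinarith [sq_nonneg (a₁ * b₂ - a₂ * b₁), sq_nonneg (a₁ * b₁ + a₂ * b₂ - A * B),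
      sq_nonneg (a₁ * b₁ + a₂ * b₂ + A * B), mul_nonneg hA hB]
  have hrev : A * B ≤ a₁ * b₁ + a₂ * b₂ := by nlinarith
  have heq : a₁ * b₁ + a₂ * b₂ = A * B := hcs.antisymm hrev
  refine ⟨by nlinarith, ?_⟩
  have hzero : (a₁ * B - b₁ * A) ^ 2 + (a₂ * B - b₂ * A) ^ 2 = 0 := by
    linear_combination (-B ^ 2) * hxy - A ^ 2 * hyz - 2 * A * B * heq
  nlinarith [sq_nonneg (a₁ * B - b₁ * A), sq_nonneg (a₂ * B - b₂ * A)]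

theorem WithLp.subset_preimage_prod_image {p : ENNReal} {α β : Type*}
    (S : Set (WithLp p (α × β))) :
    S ⊆ WithLp.ofLp ⁻¹' ((WithLp.fst '' S) ×ˢ (WithLp.snd '' S)) :=
  fun _ hx => ⟨mem_image_of_mem _ hx, mem_image_of_mem _ hx⟩

theorem WithLp.fst_image_preimage_prod {p : ENNReal} {α β : Type*} (A : Set α) {B : Set β}
    (hB : B.Nonempty) :
    WithLp.fst '' (WithLp.ofLp ⁻¹' (A ×ˢ B) : Set (WithLp p (α × β))) = A := by
  rw [show (WithLp.fst : WithLp p (α × β) → α) = Prod.fst ∘ WithLp.ofLp from rfl, image_comp,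
    image_preimage_eq _ (WithLp.ofLp_surjective p), fst_image_prod _ hB]

theorem WithLp.snd_image_preimage_prod {p : ENNReal} {α β : Type*} {A : Set α} (B : Set β)
    (hA : A.Nonempty) :
    WithLp.snd '' (WithLp.ofLp ⁻¹' (A ×ˢ B) : Set (WithLp p (α × β))) = B := by
  rw [show (WithLp.snd : WithLp p (α × β) → β) = Prod.snd ∘ WithLp.ofLp from rfl, image_comp,
    image_preimage_eq _ (WithLp.ofLp_surjective p), snd_image_prod hA]

theorem IsFlat.nonempty {X : Type*} [MetricSpace X] {F : Set X} (hF : IsFlat F) :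
    F.Nonempty := by
  obtain ⟨k, e, -, rfl⟩ := hF
  exact range_nonempty e

theorem Isometry.isFlat_range {E X : Type*} [NormedAddCommGroup E] [NormedSpace ℝ E]
    [InnerProductSpaceable E] [FiniteDimensional ℝ E] [MetricSpace X] {g : E → X}
    (hg : Isometry g) : IsFlat (range g) := by
  have : ProperSpace E := FiniteDimensional.proper ℝ E
  obtain ⟨_⟩ := nonempty_innerProductSpace ℝ E
  -- the inner product space structure carries its own scalar action: forget the old one and
  -- recover finite dimensionality from local compactness
  clear ‹FiniteDimensional ℝ E› ‹NormedSpace ℝ E›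
  have : FiniteDimensional ℝ E := .of_locallyCompactSpace ℝ
  let φ := (stdOrthonormalBasis ℝ E).repr.symm
  exact ⟨_, g ∘ φ, hg.comp φ.isometry, φ.surjective.range_comp g⟩

theorem isFlat_range_of_dist_eq_seminorm {V X : Type*} [AddCommGroup V] [Module ℝ V]
    [FiniteDimensional ℝ V] [MetricSpace X] (p : Seminorm ℝ V)
    (hp : ∀ u v, p (u + v) ^ 2 + p (u - v) ^ 2 = 2 * (p u ^ 2 + p v ^ 2))
    {f : V → X} (hf : ∀ x y, dist (f x) (f y) = p (x - y)) : IsFlat (range f) := by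
  let : SeminormedAddCommGroup V := p.toAddGroupSeminorm.toSeminormedAddCommGroup
  let : NormedSpace ℝ V := ⟨fun a v => (map_smul_eq_mul p a v).le⟩
  have hf : ∀ x y, dist (f x) (f y) = dist x y := fun x y =>
    (hf x y).trans (dist_eq_norm x y).symm
  have : InnerProductSpaceable (SeparationQuotient V) := ⟨by
    simp only [SeparationQuotient.surjective_mk.forall, ← SeparationQuotient.mk_add,
      ← SeparationQuotient.mk_sub, SeparationQuotient.norm_mk]
    intro u v
    linear_combination hp u v⟩
  have : FiniteDimensional ℝ (SeparationQuotient V) :=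
    .of_surjective (SeparationQuotient.mkCLM ℝ V).toLinearMap SeparationQuotient.surjective_mk
  let g := SeparationQuotient.lift f fun x y hxy => by
    rw [← dist_eq_zero, hf, Metric.inseparable_iff.1 hxy]
  have hg : Isometry g := Isometry.of_dist_eq <| by
    simp only [SeparationQuotient.surjective_mk.forall, SeparationQuotient.lift_mk,
      SeparationQuotient.dist_mk, g, hf, implies_true]
  simpa only [← SeparationQuotient.surjective_mk.range_comp g, g,
    SeparationQuotient.lift_comp_mk] using hg.isFlat_range

namespace Isometry

section NormedSpace

variable {V X₁ X₂ : Type*} [NormedAddCommGroup V] [NormedSpace ℝ V] [PseudoMetricSpace X₁]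
  [PseudoMetricSpace X₂] {e : V → WithLp 2 (X₁ × X₂)}

theorem dist_fst_add_smul (he : Isometry e) (x v : V) (s t : ℝ) :
    dist (e (x + s • v)).fst (e (x + t • v)).fst =
      dist (e x).fst (e (x + v)).fst * |s - t| := by
  rcases eq_or_ne v 0 with rfl | hv
  · simp
  have hline : ∀ s t : ℝ, dist (e (x + s • v)) (e (x + t • v)) = |s - t| * ‖v‖ := by
    intro s t
    rw [he.dist_eq, dist_add_left, dist_eq_norm, ← sub_smul, norm_smul, Real.norm_eq_abs]
  have hbetween : ∀ s t u : ℝ, s < t → t < u →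
      dist (e (x + s • v)) (e (x + u • v)) =
        dist (e (x + s • v)) (e (x + t • v)) + dist (e (x + t • v)) (e (x + u • v)) := by
    intro s t u hst htu
    rw [hline, hline, hline, abs_of_neg (sub_neg.2 hst), abs_of_neg (sub_neg.2 htu),
      abs_of_neg (sub_neg.2 (hst.trans htu))]
    ring
  have h := eq_mul_abs_sub_of_additive_of_proportional
    (f := fun s t => dist (e (x + s • v)).fst (e (x + t • v)).fst)
    (fun _ _ => dist_comm _ _) (fun _ => dist_self _)
    (fun s t u hst htu => (WithLp.dist_fst_eq_add_and_mul_eq_of_dist_eq_add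
      (hbetween s t u hst htu)).1)
    (fun s t u hst htu => by
      have h := (WithLp.dist_fst_eq_add_and_mul_eq_of_dist_eq_add (hbetween s t u hst htu)).2
      rw [hline, hline, abs_of_neg (sub_neg.2 hst), abs_of_neg (sub_neg.2 htu)] at h
      refine mul_right_cancel₀ (norm_ne_zero_iff.2 hv) ?_
      linear_combination h) s t
  simpa using h

theorem isMidpoint_fst_add_smul (he : Isometry e) (x v : V) (s t : ℝ) :
    IsMidpoint (e (x + s • v)).fst (e (x + t • v)).fst (e (x + ((s + t) / 2) • v)).fst := by
  simp only [IsMidpoint, he.dist_fst_add_smul]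
  constructor
  · rw [show s - (s + t) / 2 = (s - t) / 2 by ring, abs_div, abs_two]
    ring
  · rw [show t - (s + t) / 2 = (t - s) / 2 by ring, abs_div, abs_two, abs_sub_comm]
    ring

end NormedSpace

section CAT0

variable {V X₁ X₂ : Type*} [NormedAddCommGroup V] [NormedSpace ℝ V] [MetricSpace X₁]
  [MetricSpace X₂] {e : V → WithLp 2 (X₁ × X₂)}

theorem dist_fst_add_add (he : Isometry e) (hX₁ : CAT0Space X₁) (x y v : V) :
    dist (e (x + v)).fst (e (y + v)).fst = dist (e x).fst (e y).fst := by
  let φ : ℝ → ℝ := fun t => dist (e (x + t • v)).fst (e (y + t • v)).fst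
  have hmid : ∀ s t, φ ((s + t) / 2) ≤ (φ s + φ t) / 2 := fun s t =>
    hX₁.dist_le_of_isMidpoint (he.isMidpoint_fst_add_smul x v s t)
      (he.isMidpoint_fst_add_smul y v s t)
  have hbdd : BddAbove (range φ) := by
    refine ⟨dist x y, ?_⟩
    rintro _ ⟨t, rfl⟩
    calc φ t ≤ dist (e (x + t • v)) (e (y + t • v)) := WithLp.dist_fst_le _ _
      _ = dist x y := by rw [he.dist_eq, dist_add_right]
  simpa [φ] using apply_eq_apply_of_midpoint_le_of_bddAbove hmid hbdd 1 0

def fstSeminorm (he : Isometry e) (hX₁ : CAT0Space X₁) : Seminorm ℝ V :=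
  Seminorm.of (fun v => dist (e 0).fst (e v).fst)
    (fun u v => by
      calc dist (e 0).fst (e (u + v)).fst
          ≤ dist (e 0).fst (e u).fst + dist (e u).fst (e (u + v)).fst := dist_triangle _ _ _
        _ = dist (e 0).fst (e u).fst + dist (e 0).fst (e v).fst := by
          rw [← he.dist_fst_add_add hX₁ 0 v u, zero_add, add_comm v])
    (fun a v => by simpa [mul_comm] using he.dist_fst_add_smul 0 v 0 a)

theorem dist_fst_eq_fstSeminorm (he : Isometry e) (hX₁ : CAT0Space X₁) (x y : V) :
    dist (e x).fst (e y).fst = he.fstSeminorm hX₁ (x - y) := by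
  change _ = dist (e 0).fst (e (x - y)).fst
  rw [dist_comm, ← he.dist_fst_add_add hX₁ 0 (x - y) y, zero_add, sub_add_cancel]

end CAT0

section InnerProductSpace

variable {V X₁ X₂ : Type*} [NormedAddCommGroup V] [InnerProductSpace ℝ V] [MetricSpace X₁]
  [MetricSpace X₂] {e : V → WithLp 2 (X₁ × X₂)}

theorem fstSeminorm_parallelogram (he : Isometry e) (hX₁ : CAT0Space X₁)
    (hX₂ : CAT0Space X₂) (u v : V) :
    he.fstSeminorm hX₁ (u + v) ^ 2 + he.fstSeminorm hX₁ (u - v) ^ 2 =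
      2 * (he.fstSeminorm hX₁ u ^ 2 + he.fstSeminorm hX₁ v ^ 2) := by
  have he' : Isometry (IsometryEquiv.withLpProdComm 2 X₁ X₂ ∘ e) :=
    (IsometryEquiv.withLpProdComm 2 X₁ X₂).isometry.comp he
  have hsum : ∀ w, he.fstSeminorm hX₁ w ^ 2 + he'.fstSeminorm hX₂ w ^ 2 = ‖w‖ ^ 2 := by
    intro w
    rw [← sub_zero w, ← he.dist_fst_eq_fstSeminorm, ← he'.dist_fst_eq_fstSeminorm,
      ← dist_eq_norm, ← he.dist_eq]
    exact (WithLp.prod_dist_sq _ _).symm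
  have h₁ := hX₁.parallelogram_le _ (he.dist_fst_eq_fstSeminorm hX₁) u v
  have h₂ := hX₂.parallelogram_le _ (he'.dist_fst_eq_fstSeminorm hX₂) u v
  linarith [hsum u, hsum v, hsum (u + v), hsum (u - v), norm_add_sq_real u v,
    norm_sub_sq_real u v]

theorem isFlat_range_fst [FiniteDimensional ℝ V] (he : Isometry e) (hX₁ : CAT0Space X₁)
    (hX₂ : CAT0Space X₂) : IsFlat (range fun x => (e x).fst) :=
  isFlat_range_of_dist_eq_seminorm _ (he.fstSeminorm_parallelogram hX₁ hX₂)
    (he.dist_fst_eq_fstSeminorm hX₁)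

theorem isFlat_range_snd [FiniteDimensional ℝ V] (he : Isometry e) (hX₁ : CAT0Space X₁)
    (hX₂ : CAT0Space X₂) : IsFlat (range fun x => (e x).snd) :=
  ((IsometryEquiv.withLpProdComm 2 X₁ X₂).isometry.comp he).isFlat_range_fst hX₂ hX₁

end InnerProductSpace

end Isometry

section Flats

variable {X₁ X₂ : Type*} [MetricSpace X₁] [MetricSpace X₂]

theorem IsFlat.preimage_prod {F₁ : Set X₁} {F₂ : Set X₂} (hF₁ : IsFlat F₁)
    (hF₂ : IsFlat F₂) :
    IsFlat (WithLp.ofLp ⁻¹' (F₁ ×ˢ F₂) : Set (WithLp 2 (X₁ × X₂))) := by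
  obtain ⟨k₁, e₁, he₁, rfl⟩ := hF₁
  obtain ⟨k₂, e₂, he₂, rfl⟩ := hF₂
  convert Isometry.isFlat_range (he₁.withLpProdMap 2 he₂)
  ext x
  constructor
  · rintro ⟨⟨y₁, hy₁⟩, ⟨y₂, hy₂⟩⟩
    refine ⟨WithLp.toLp 2 (y₁, y₂), ?_⟩
    change WithLp.toLp 2 (e₁ y₁, e₂ y₂) = x
    rw [hy₁, hy₂]
  · rintro ⟨y, rfl⟩
    exact ⟨mem_range_self _, mem_range_self _⟩

theorem IsFlat.image_fst (hX₁ : CAT0Space X₁) (hX₂ : CAT0Space X₂)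
    {F : Set (WithLp 2 (X₁ × X₂))} (hF : IsFlat F) : IsFlat (WithLp.fst '' F) := by
  obtain ⟨k, e, he, rfl⟩ := hF
  rw [← range_comp]
  exact he.isFlat_range_fst hX₁ hX₂

theorem IsFlat.image_snd (hX₁ : CAT0Space X₁) (hX₂ : CAT0Space X₂)
    {F : Set (WithLp 2 (X₁ × X₂))} (hF : IsFlat F) : IsFlat (WithLp.snd '' F) := by
  obtain ⟨k, e, he, rfl⟩ := hF
  rw [← range_comp]
  exact he.isFlat_range_snd hX₁ hX₂

theorem IsMaximalFlat.eq_preimage_prod (hX₁ : CAT0Space X₁) (hX₂ : CAT0Space X₂)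
    {F : Set (WithLp 2 (X₁ × X₂))} (hF : IsMaximalFlat F) :
    F = WithLp.ofLp ⁻¹' ((WithLp.fst '' F) ×ˢ (WithLp.snd '' F)) :=
  hF.2 _ ((hF.1.image_fst hX₁ hX₂).preimage_prod (hF.1.image_snd hX₁ hX₂))
    (WithLp.subset_preimage_prod_image F)

theorem isMaximalFlat_preimage_prod_iff (hX₁ : CAT0Space X₁) (hX₂ : CAT0Space X₂)
    {F₁ : Set X₁} {F₂ : Set X₂} (hF₁ : IsFlat F₁) (hF₂ : IsFlat F₂) :
    IsMaximalFlat (WithLp.ofLp ⁻¹' (F₁ ×ˢ F₂) : Set (WithLp 2 (X₁ × X₂))) ↔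
      IsMaximalFlat F₁ ∧ IsMaximalFlat F₂ := by
  constructor
  · intro hF
    refine ⟨⟨hF₁, fun F' hF' hsub => ?_⟩, ⟨hF₂, fun F' hF' hsub => ?_⟩⟩
    · have h := hF.2 _ (hF'.preimage_prod hF₂) (preimage_mono (prod_mono hsub subset_rfl))
      simpa only [WithLp.fst_image_preimage_prod _ hF₂.nonempty] using
        congrArg (WithLp.fst '' ·) h
    · have h := hF.2 _ (hF₁.preimage_prod hF') (preimage_mono (prod_mono subset_rfl hsub))
      simpa only [WithLp.snd_image_preimage_prod _ hF₁.nonempty] using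
        congrArg (WithLp.snd '' ·) h
  · rintro ⟨hF₁, hF₂⟩
    refine ⟨hF₁.1.preimage_prod hF₂.1, fun F' hF' hsub => hsub.antisymm ?_⟩
    have h₁ := hF₁.2 _ (hF'.image_fst hX₁ hX₂)
      ((WithLp.fst_image_preimage_prod F₁ hF₂.1.nonempty).symm.trans_subset (image_mono hsub))
    have h₂ := hF₂.2 _ (hF'.image_snd hX₁ hX₂)
      ((WithLp.snd_image_preimage_prod F₂ hF₁.1.nonempty).symm.trans_subset (image_mono hsub))
    rw [h₁, h₂]
    exact WithLp.subset_preimage_prod_image F'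

end Flats

theorem maximalFlat_prod_iff {X₁ X₂ : Type*} [MetricSpace X₁] [MetricSpace X₂]
    (h₁ : CAT0Space X₁) (h₂ : CAT0Space X₂) (F : Set (WithLp 2 (X₁ × X₂))) :
    IsMaximalFlat F ↔ ∃ (F₁ : Set X₁) (F₂ : Set X₂), IsMaximalFlat F₁ ∧ IsMaximalFlat F₂ ∧
      F = {p : WithLp 2 (X₁ × X₂) |
        (WithLp.equiv 2 (X₁ × X₂) p).1 ∈ F₁ ∧ (WithLp.equiv 2 (X₁ × X₂) p).2 ∈ F₂} := by
  constructor
  · intro hF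
    have hprod := hF.eq_preimage_prod h₁ h₂
    have hmax := (isMaximalFlat_preimage_prod_iff h₁ h₂ (hF.1.image_fst h₁ h₂)
      (hF.1.image_snd h₁ h₂)).1 (by rwa [← hprod])
    exact ⟨_, _, hmax.1, hmax.2, hprod⟩
  · rintro ⟨F₁, F₂, hF₁, hF₂, rfl⟩
    exact (isMaximalFlat_preimage_prod_iff h₁ h₂ hF₁.1 hF₂.1).2 ⟨hF₁, hF₂⟩
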